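/- arXiv:2603.25890 — 3 statements merged into one kernel-verified Lean document; each statement's English description precedes it below -/
import Mathlib

section
/- Let P : ℝⁿ → Matrix (Fin m) (Fin m) ℝ be a map such that each entry of P(x) is a polynomial in the coordinates of x, and suppose P(x) is upper triangular unipotent for all x. Then there exists a polynomial R : ℝ → ℝ, nondecreasing on [0,∞), such that for all x ∈ ℝⁿ and all v ∈ ℝ^m, ‖P(x) v‖ ≤ R(‖x‖) · ‖v‖ and ‖v‖ ≤ R(‖x‖) · ‖P(x) v‖. -/
/-! Since `P x` is unipotent, `det (P x) = 1`, so `(P x)⁻¹` is the adjugate, whose entries are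
again polynomials in `x`. A matrix with polynomial entries acts with norm at most
`C * (‖x‖ + 1) ^ d`: every monomial is bounded by a power of `‖x‖ + 1 ≥ 1`. Applied to `P` and to
its adjugate this gives both inequalities. -/

open Finset

lemma OrthonormalBasis.norm_le_sum_norm_repr {ι 𝕜 E : Type*} [Fintype ι] [RCLike 𝕜]
    [NormedAddCommGroup E] [InnerProductSpace 𝕜 E] (b : OrthonormalBasis ι 𝕜 E) (x : E) :
    ‖x‖ ≤ ∑ i, ‖b.repr x i‖ := by
  conv_lhs => rw [← b.sum_repr x]
  refine (norm_sum_le _ _).trans_eq (sum_congr rfl fun i _ => ?_)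
  rw [norm_smul, b.orthonormal.1 i, mul_one]

lemma EuclideanSpace.norm_le_sum_abs {ι : Type*} [Fintype ι] (w : EuclideanSpace ℝ ι) :
    ‖w‖ ≤ ∑ i, |w i| :=
  (EuclideanSpace.basisFun ι ℝ).norm_le_sum_norm_repr w

lemma Matrix.norm_mulVec_le_of_abs_le {ι κ : Type*} [Fintype ι] [Fintype κ]
    (M : Matrix ι κ ℝ) {B : ℝ} (hM : ∀ i j, |M i j| ≤ B) (v : EuclideanSpace ℝ κ) :
    ‖(EuclideanSpace.equiv ι ℝ).symm (M.mulVec v)‖ ≤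
      Fintype.card ι * Fintype.card κ * B * ‖v‖ := by
  have hrow : ∀ i, |(M.mulVec v) i| ≤ Fintype.card κ * B * ‖v‖ := fun i => calc
    |(M.mulVec v) i| ≤ ∑ j, |M i j| * |v j| := by
      simpa only [Matrix.mulVec, dotProduct, abs_mul] using
        abs_sum_le_sum_abs (fun j => M i j * v j) univ
    _ ≤ ∑ _j : κ, B * ‖v‖ := sum_le_sum fun j _ =>
      mul_le_mul (hM i j) (PiLp.norm_apply_le v j) (abs_nonneg _) ((abs_nonneg _).trans (hM i j))
    _ = Fintype.card κ * B * ‖v‖ := by simp [mul_assoc]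
  calc ‖(EuclideanSpace.equiv ι ℝ).symm (M.mulVec v)‖ ≤ ∑ i, |(M.mulVec v) i| :=
        EuclideanSpace.norm_le_sum_abs _
    _ ≤ ∑ _i : ι, Fintype.card κ * B * ‖v‖ := sum_le_sum fun i _ => hrow i
    _ = Fintype.card ι * Fintype.card κ * B * ‖v‖ := by simp [mul_assoc]

lemma MvPolynomial.abs_eval_le {σ : Type*} (q : MvPolynomial σ ℝ) {x : σ → ℝ} {r : ℝ}
    (hr : 1 ≤ r) (hx : ∀ k, |x k| ≤ r) :
    |eval x q| ≤ (∑ s ∈ q.support, |q.coeff s|) * r ^ q.totalDegree := by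
  rw [eval_eq, sum_mul]
  refine (abs_sum_le_sum_abs _ _).trans (sum_le_sum fun s hs => ?_)
  rw [abs_mul]
  refine mul_le_mul_of_nonneg_left ?_ (abs_nonneg _)
  calc |∏ k ∈ s.support, x k ^ s k| ≤ ∏ k ∈ s.support, r ^ s k := by
        rw [abs_prod]
        exact prod_le_prod (fun k _ => abs_nonneg _) fun k _ => by
          rw [abs_pow]; exact pow_le_pow_left₀ (abs_nonneg _) (hx k) _
    _ = r ^ s.sum fun _ e => e := prod_pow_eq_pow_sum _ _ _
    _ ≤ r ^ q.totalDegree := pow_le_pow_right₀ hr (le_totalDegree hs)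

lemma MvPolynomial.exists_forall_abs_eval_le {ι σ : Type*} [Fintype ι]
    (q : ι → MvPolynomial σ ℝ) :
    ∃ C : ℝ, ∃ d : ℕ, 0 ≤ C ∧ ∀ {x : σ → ℝ} {r : ℝ}, 1 ≤ r → (∀ k, |x k| ≤ r) →
      ∀ i, |eval x (q i)| ≤ C * r ^ d := by
  refine ⟨∑ i, ∑ s ∈ (q i).support, |(q i).coeff s|, univ.sup fun i => (q i).totalDegree,
    by positivity, fun hr hx i => (abs_eval_le (q i) hr hx).trans ?_⟩
  gcongr
  · exact single_le_sum (f := fun i => ∑ s ∈ (q i).support, |(q i).coeff s|)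
      (fun i _ => by positivity) (mem_univ i)
  · exact le_sup (f := fun i => (q i).totalDegree) (mem_univ i)

lemma Matrix.exists_norm_mulVec_map_eval_le {ι κ σ : Type*} [Fintype ι] [Fintype κ]
    [Fintype σ] (Q : Matrix ι κ (MvPolynomial σ ℝ)) :
    ∃ C : ℝ, ∃ d : ℕ, 0 ≤ C ∧ ∀ (x : EuclideanSpace ℝ σ) (v : EuclideanSpace ℝ κ),
      ‖(EuclideanSpace.equiv ι ℝ).symm ((Q.map (MvPolynomial.eval fun k => x k)).mulVec v)‖ ≤
        C * (‖x‖ + 1) ^ d * ‖v‖ := by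
  obtain ⟨C, d, hC, hQ⟩ := MvPolynomial.exists_forall_abs_eval_le fun ij : ι × κ => Q ij.1 ij.2
  refine ⟨Fintype.card ι * Fintype.card κ * C, d, by positivity, fun x v => ?_⟩
  have hx : ∀ k, |x k| ≤ ‖x‖ + 1 := fun k =>
    (PiLp.norm_apply_le x k).trans (le_add_of_nonneg_right zero_le_one)
  have hr : 1 ≤ ‖x‖ + 1 := le_add_of_nonneg_left (norm_nonneg x)
  simpa only [mul_assoc] using
    norm_mulVec_le_of_abs_le (Q.map (MvPolynomial.eval fun k => x k)) (fun i j => hQ hr hx (i, j)) v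

lemma monotoneOn_mul_add_one_pow {C : ℝ} (hC : 0 ≤ C) (d : ℕ) :
    MonotoneOn (fun t : ℝ => C * (t + 1) ^ d) (Set.Ici 0) := fun a ha _ _ hab => by
  have : 0 ≤ a + 1 := by linarith [Set.mem_Ici.mp ha]
  dsimp only
  gcongr

theorem stmt_3 (n m : ℕ) (P : EuclideanSpace ℝ (Fin n) → Matrix (Fin m) (Fin m) ℝ)
    (Q : Fin m → Fin m → MvPolynomial (Fin n) ℝ)
    (hpoly : ∀ x i j, P x i j = MvPolynomial.eval (fun k => x k) (Q i j))
    (hupper : ∀ x, (P x).BlockTriangular id) (hdiag : ∀ x i, P x i i = 1) :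
    ∃ R : Polynomial ℝ, MonotoneOn (fun t => R.eval t) (Set.Ici (0 : ℝ)) ∧
      ∀ (x : EuclideanSpace ℝ (Fin n)) (v : EuclideanSpace ℝ (Fin m)),
        ‖(EuclideanSpace.equiv (Fin m) ℝ).symm ((P x).mulVec v)‖ ≤ R.eval ‖x‖ * ‖v‖ ∧
        ‖v‖ ≤ R.eval ‖x‖ * ‖(EuclideanSpace.equiv (Fin m) ℝ).symm ((P x).mulVec v)‖ := by
  let QM : Matrix (Fin m) (Fin m) (MvPolynomial (Fin n) ℝ) := Matrix.of Q
  have hP : ∀ x, P x = QM.map (MvPolynomial.eval fun k => x k) := fun x => by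
    ext i j; exact hpoly x i j
  have hadj : ∀ x, (P x).adjugate = QM.adjugate.map (MvPolynomial.eval fun k => x k) :=
    fun x => by
      rw [hP, ← RingHom.mapMatrix_apply, ← RingHom.map_adjugate, RingHom.mapMatrix_apply]
  have hdet : ∀ x, (P x).det = 1 := fun x => by
    simp [Matrix.det_of_isUpperTriangular (hupper x), hdiag]
  obtain ⟨C₁, d₁, hC₁, hbound₁⟩ := QM.exists_norm_mulVec_map_eval_le
  obtain ⟨C₂, d₂, hC₂, hbound₂⟩ := QM.adjugate.exists_norm_mulVec_map_eval_le
  refine ⟨.C C₁ * (.X + 1) ^ d₁ + .C C₂ * (.X + 1) ^ d₂, ?_, fun x v => ?_⟩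
  · simpa using (monotoneOn_mul_add_one_pow hC₁ d₁).add (monotoneOn_mul_add_one_pow hC₂ d₂)
  set w := (EuclideanSpace.equiv (Fin m) ℝ).symm ((P x).mulVec v)
  have hv : (EuclideanSpace.equiv (Fin m) ℝ).symm ((P x).adjugate.mulVec w) = v := by
    simp [w, Matrix.mulVec_mulVec, Matrix.adjugate_mul, hdet]
  have h₁ := hbound₁ x v
  have h₂ := hbound₂ x w
  rw [← hP] at h₁
  rw [← hadj, hv] at h₂
  simp only [Polynomial.eval_add, Polynomial.eval_mul, Polynomial.eval_C, Polynomial.eval_pow,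
    Polynomial.eval_X, Polynomial.eval_one]
  have hR₁ : 0 ≤ C₁ * (‖x‖ + 1) ^ d₁ := by positivity
  have hR₂ : 0 ≤ C₂ * (‖x‖ + 1) ^ d₂ := by positivity
  constructor <;> nlinarith [norm_nonneg v, norm_nonneg w, hR₁, hR₂]
end

section
/- Let σ : Δᵏ → ℝⁿ be a Lipschitz map from the standard k-simplex, and define the cone Σ : Δ^{k+1} → ℝⁿ by Σ(t·x̄) = t·σ(x̄) for x̄ ∈ Δᵏ ⊂ ℝ^{k} (viewing Δ^{k+1} as the cone on Δᵏ with apex 0), Σ(0) = 0. If the image of σ is contained in the ball B(0, D), then the (k+1)-dimensional Hausdorff measure (mass) of Σ satisfies mass(Σ) ≤ D · mass(σ), and the image of Σ is contained in B(0, D). -/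
open MeasureTheory

/-- The standard full-dimensional simplex in ℝᵏ with vertices 0, e₁, …, e_k. -/
def stdCone (k : ℕ) : Set (Fin k → ℝ) := {x | (∀ i, 0 ≤ x i) ∧ ∑ i, x i ≤ 1}

/-- ‖Λᵏ f‖, the k-Jacobian of a linear map ℝᵏ → ℝⁿ, via the Gram determinant. -/
noncomputable def jacNorm {k n : ℕ} (f : (Fin k → ℝ) →L[ℝ] EuclideanSpace ℝ (Fin n)) : ℝ :=
  Real.sqrt (Matrix.det (Matrix.of fun i j =>
    (inner ℝ (f (Pi.single i 1 : Fin k → ℝ)) (f (Pi.single j 1 : Fin k → ℝ)) : ℝ)))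

/-- mass(σ) = ∫_{Δᵏ} ‖Λᵏ dσ(x)‖ dλ_k(x), the area-formula mass of a Lipschitz
singular simplex σ : Δᵏ → ℝⁿ. -/
noncomputable def simplexMass {k n : ℕ} (σ : (Fin k → ℝ) → EuclideanSpace ℝ (Fin n)) : ℝ :=
  ∫ x in stdCone k, jacNorm (fderiv ℝ σ x)

/-- The cone over σ with apex the origin, (t, x̄) ↦ t·σ(x̄), parametrized over
the cone domain {y : y₀ ∈ [0,1], (y₁,…,y_k) ∈ Δᵏ} ⊆ ℝ^{k+1}. -/
noncomputable def coneMap {k n : ℕ} (σ : (Fin k → ℝ) → EuclideanSpace ℝ (Fin n)) :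
    (Fin (k + 1) → ℝ) → EuclideanSpace ℝ (Fin n) :=
  fun y => (y 0) • σ (fun i => y i.succ)

/-- The domain of the cone parametrization. -/
def coneDomain (k : ℕ) : Set (Fin (k + 1) → ℝ) :=
  {y | y 0 ∈ Set.Icc (0 : ℝ) 1 ∧ (fun i => y i.succ) ∈ stdCone k}


/-!
At `y = (t, x)` the partial derivatives of the cone are `σ x` in the radial direction and
`t • ∂ⱼσ x` in the others. Replacing `σ x` by its component orthogonal to the span of the `∂ⱼσ x`
does not change the Gram determinant and makes it split off the factor `‖σ x‖²`, so
`J(coneMap σ) y ≤ ‖σ x‖ · tᵏ · J σ x ≤ D · J σ x`. Integrating over `[0, 1] × Δᵏ` gives the bound.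
Lipschitz continuity bounds `J σ` by `Kᵏ` (Hadamard's inequality for Gram determinants), so `J σ`
is integrable; otherwise `simplexMass σ` would be the junk value `0`.
-/

namespace Matrix

variable {E : Type*} [NormedAddCommGroup E] [InnerProductSpace ℝ E]

theorem gram_sum_smul {ι κ : Type*} [Fintype κ] (L : Matrix ι κ ℝ) (v : κ → E) :
    gram ℝ (fun i => ∑ j, L i j • v j) = L * gram ℝ v * Lᵀ := by
  ext i j
  simp only [gram_apply, mul_apply, transpose_apply, sum_inner, inner_sum, real_inner_smul_left,
    real_inner_smul_right, Finset.sum_mul]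
  exact Finset.sum_congr rfl fun a _ => Finset.sum_congr rfl fun b _ => by ring

theorem det_gram_cons_add_of_mem_span {k : ℕ} (u s : E) (w : Fin k → E)
    (hs : s ∈ Submodule.span ℝ (Set.range w)) :
    (gram ℝ (Fin.cons (u + s) w : Fin (k + 1) → E)).det =
      (gram ℝ (Fin.cons u w : Fin (k + 1) → E)).det := by
  obtain ⟨c, rfl⟩ := Submodule.mem_span_range_iff_exists_fun ℝ |>.mp hs
  set L : Matrix (Fin (k + 1)) (Fin (k + 1)) ℝ :=
    of (Fin.cons (Fin.cons 1 c) fun i => Pi.single i.succ 1)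
  have hL : (Fin.cons (u + ∑ i, c i • w i) w : Fin (k + 1) → E) =
      fun i => ∑ j, L i j • (Fin.cons u w : Fin (k + 1) → E) j := by
    ext1 i
    refine Fin.cases ?_ (fun i => ?_) i
    · simp [L, Fin.sum_univ_succ]
    · simp [L, Pi.single_apply]
  have hdetL : L.det = 1 := by
    rw [det_of_isUpperTriangular]
    · refine Finset.prod_eq_one fun i _ => Fin.cases ?_ (fun i => ?_) i <;> simp [L]
    · intro i j hij
      refine Fin.cases (fun h => absurd h (Fin.not_lt_zero _)) (fun i hij => ?_) i hij
      simp [L, (show j ≠ i.succ from hij.ne)]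
  rw [hL, gram_sum_smul, det_mul, det_mul, det_transpose, hdetL, one_mul, mul_one]

theorem det_gram_cons_of_inner_eq_zero {k : ℕ} (u : E) (w : Fin k → E)
    (hu : ∀ i, inner ℝ u (w i) = 0) :
    (gram ℝ (Fin.cons u w : Fin (k + 1) → E)).det = ‖u‖ ^ 2 * (gram ℝ w).det := by
  rw [det_succ_row_zero, Fin.sum_univ_succ, Finset.sum_eq_zero fun j _ => by
    simp [gram_apply, hu]]
  simp [gram, submatrix]

theorem det_gram_cons_le {k : ℕ} (v : E) (w : Fin k → E) :
    (gram ℝ (Fin.cons v w : Fin (k + 1) → E)).det ≤ ‖v‖ ^ 2 * (gram ℝ w).det := by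
  set S := Submodule.span ℝ (Set.range w)
  have : FiniteDimensional ℝ S := FiniteDimensional.span_of_finite ℝ (Set.finite_range w)
  have hperp : v - S.starProjection v ∈ Sᗮ := S.sub_starProjection_mem_orthogonal v
  calc (gram ℝ (Fin.cons v w : Fin (k + 1) → E)).det
      = (gram ℝ (Fin.cons (v - S.starProjection v) w : Fin (k + 1) → E)).det := by
        rw [← det_gram_cons_add_of_mem_span (v - S.starProjection v) _ w
          (S.starProjection_apply_mem v), sub_add_cancel]
    _ = ‖v - S.starProjection v‖ ^ 2 * (gram ℝ w).det :=
        det_gram_cons_of_inner_eq_zero _ w fun i =>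
          (Submodule.mem_orthogonal' S _).mp hperp _ (Submodule.subset_span ⟨i, rfl⟩)
    _ ≤ ‖v‖ ^ 2 * (gram ℝ w).det := by
        gcongr
        · exact (posSemidef_gram ℝ w).det_nonneg
        · rw [← S.starProjection_orthogonal_val]
          exact Sᗮ.norm_starProjection_apply_le v

theorem det_gram_le_prod_norm_sq {k : ℕ} (v : Fin k → E) :
    (gram ℝ v).det ≤ ∏ i, ‖v i‖ ^ 2 := by
  induction k with
  | zero => simp
  | succ k ih =>
    rw [← Fin.cons_self_tail v, Fin.prod_univ_succ]
    calc _ ≤ ‖v 0‖ ^ 2 * (gram ℝ (Fin.tail v)).det := det_gram_cons_le _ _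
      _ ≤ _ := by
        simp only [Fin.cons_zero, Fin.cons_succ]
        gcongr
        exact ih _

end Matrix

theorem Fin.tail_single_zero {k : ℕ} {M : Type*} [Zero M] (x : M) :
    Fin.tail (Pi.single 0 x : Fin (k + 1) → M) = 0 := by
  ext i
  simp [Fin.tail, Fin.succ_ne_zero]

theorem Fin.tail_single_succ {k : ℕ} {M : Type*} [Zero M] (j : Fin k) (x : M) :
    Fin.tail (Pi.single j.succ x : Fin (k + 1) → M) = Pi.single j x := by
  ext i
  simp [Fin.tail, Pi.single_apply]

section jacNorm

open Matrix

variable {k n : ℕ}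

theorem jacNorm_eq_sqrt_det_gram (f : (Fin k → ℝ) →L[ℝ] EuclideanSpace ℝ (Fin n)) :
    jacNorm f = √(gram ℝ fun i => f (Pi.single i 1)).det :=
  rfl

theorem jacNorm_nonneg (f : (Fin k → ℝ) →L[ℝ] EuclideanSpace ℝ (Fin n)) : 0 ≤ jacNorm f :=
  Real.sqrt_nonneg _

-- For `k = 0` the empty Gram determinant is `1`, hence the `k + 1`.
theorem jacNorm_zero :
    jacNorm (0 : (Fin (k + 1) → ℝ) →L[ℝ] EuclideanSpace ℝ (Fin n)) = 0 := by
  simp [jacNorm_eq_sqrt_det_gram, ← Pi.zero_def]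

theorem jacNorm_le_opNorm_pow (f : (Fin k → ℝ) →L[ℝ] EuclideanSpace ℝ (Fin n)) :
    jacNorm f ≤ ‖f‖ ^ k := by
  rw [jacNorm_eq_sqrt_det_gram, Real.sqrt_le_iff]
  refine ⟨by positivity, (det_gram_le_prod_norm_sq _).trans ?_⟩
  rw [← pow_mul, mul_comm, pow_mul, ← Fin.prod_const]
  gcongr with i
  simpa [Pi.norm_single] using f.le_opNorm (Pi.single i 1)

theorem continuous_jacNorm :
    Continuous (jacNorm : ((Fin k → ℝ) →L[ℝ] EuclideanSpace ℝ (Fin n)) → ℝ) := by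
  unfold jacNorm
  fun_prop

theorem jacNorm_le_of_map_single_succ (f : (Fin (k + 1) → ℝ) →L[ℝ] EuclideanSpace ℝ (Fin n))
    (g : (Fin k → ℝ) →L[ℝ] EuclideanSpace ℝ (Fin n)) (t : ℝ)
    (hfg : ∀ j, f (Pi.single j.succ 1) = t • g (Pi.single j 1)) :
    jacNorm f ≤ ‖f (Pi.single 0 1)‖ * |t| ^ k * jacNorm g := by
  have hcons : (fun i => f (Pi.single i 1)) =
      Fin.cons (f (Pi.single 0 1)) (t • fun j => g (Pi.single j 1)) := by
    ext1 i
    refine Fin.cases rfl (fun j => ?_) i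
    simp [hfg]
  have hsmul : (gram ℝ (t • fun j => g (Pi.single j 1))) =
      (t ^ 2) • gram ℝ fun j => g (Pi.single j 1) := by
    ext i j
    simp [gram_apply, real_inner_smul_left, real_inner_smul_right]
    ring
  rw [jacNorm_eq_sqrt_det_gram, Real.sqrt_le_iff, hcons]
  refine ⟨by positivity [jacNorm_nonneg g], (det_gram_cons_le _ _).trans_eq ?_⟩
  have habs : (|t| ^ k) ^ 2 = (t ^ 2) ^ k := by rw [← pow_mul, mul_comm, pow_mul, sq_abs]
  rw [hsmul, det_smul, Fintype.card_fin, mul_pow, mul_pow, habs, jacNorm_eq_sqrt_det_gram,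
    Real.sq_sqrt (posSemidef_gram ℝ _).det_nonneg]
  ring

end jacNorm

section coneMap

variable {k n : ℕ} (σ : (Fin k → ℝ) → EuclideanSpace ℝ (Fin n))

theorem coneMap_apply (y : Fin (k + 1) → ℝ) : coneMap σ y = y 0 • σ (Fin.tail y) :=
  rfl

theorem hasFDerivAt_coneMap {y : Fin (k + 1) → ℝ} (hσ : DifferentiableAt ℝ σ (Fin.tail y)) :
    HasFDerivAt (coneMap σ)
      (y 0 • (fderiv ℝ σ (Fin.tail y)).comp
          (ContinuousLinearMap.pi fun i => ContinuousLinearMap.proj i.succ) +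
        (ContinuousLinearMap.proj 0).smulRight (σ (Fin.tail y))) y :=
  (hasFDerivAt_apply 0 y).smul (hσ.hasFDerivAt.comp y (by
    exact (ContinuousLinearMap.pi fun i : Fin k =>
      ContinuousLinearMap.proj (R := ℝ) (φ := fun _ : Fin (k + 1) => ℝ) i.succ).hasFDerivAt))

theorem fderiv_coneMap_apply {y : Fin (k + 1) → ℝ} (hσ : DifferentiableAt ℝ σ (Fin.tail y))
    (v : Fin (k + 1) → ℝ) :
    fderiv ℝ (coneMap σ) y v =
      y 0 • fderiv ℝ σ (Fin.tail y) (Fin.tail v) + v 0 • σ (Fin.tail y) := by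
  simp [(hasFDerivAt_coneMap σ hσ).fderiv]
  rfl

theorem DifferentiableAt.of_coneMap {y : Fin (k + 1) → ℝ} (hy : y 0 ≠ 0)
    (h : DifferentiableAt ℝ (coneMap σ) y) : DifferentiableAt ℝ σ (Fin.tail y) := by
  have hσ_eq : σ = fun x => (y 0)⁻¹ • coneMap σ (Fin.cons (y 0) x) := by
    ext1 x
    rw [coneMap_apply, Fin.cons_zero, Fin.tail_cons, inv_smul_smul₀ hy]
  have hcons : DifferentiableAt ℝ (fun x : Fin k → ℝ => (Fin.cons (y 0) x : Fin (k + 1) → ℝ))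
      (Fin.tail y) :=
    (Fin.consEquivL ℝ fun _ : Fin (k + 1) => ℝ).differentiableAt.comp _
      ((differentiableAt_const (y 0)).prodMk differentiableAt_id)
  rw [← Fin.cons_self_tail y] at h
  rw [hσ_eq]
  exact (h.comp _ hcons).const_smul (y 0)⁻¹

theorem jacNorm_fderiv_coneMap_le {D : ℝ} (hD : 0 ≤ D) {y : Fin (k + 1) → ℝ} (hy0 : y 0 ≠ 0)
    (hy1 : |y 0| ≤ 1) (hσy : ‖σ (Fin.tail y)‖ ≤ D) :
    jacNorm (fderiv ℝ (coneMap σ) y) ≤ D * jacNorm (fderiv ℝ σ (Fin.tail y)) := by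
  by_cases h : DifferentiableAt ℝ (coneMap σ) y
  · have hσ := h.of_coneMap σ hy0
    calc jacNorm (fderiv ℝ (coneMap σ) y)
        ≤ ‖σ (Fin.tail y)‖ * |y 0| ^ k * jacNorm (fderiv ℝ σ (Fin.tail y)) := by
          convert jacNorm_le_of_map_single_succ _ _ _ fun j => ?_ using 3
          · simp [fderiv_coneMap_apply σ hσ, Fin.tail_single_zero]
          · simp [fderiv_coneMap_apply σ hσ, Fin.tail_single_succ, Fin.succ_ne_zero]
      _ ≤ D * 1 * jacNorm (fderiv ℝ σ (Fin.tail y)) := by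
          gcongr
          · exact jacNorm_nonneg _
          · exact pow_le_one₀ (abs_nonneg _) hy1
      _ = D * jacNorm (fderiv ℝ σ (Fin.tail y)) := by rw [mul_one]
  · rw [fderiv_zero_of_not_differentiableAt h, jacNorm_zero]
    exact mul_nonneg hD (jacNorm_nonneg _)

theorem image_coneMap_subset_closedBall {D : ℝ}
    (hσ : σ '' stdCone k ⊆ Metric.closedBall 0 D) :
    coneMap σ '' coneDomain k ⊆ Metric.closedBall 0 D := by
  rintro _ ⟨y, ⟨⟨hy0, hy1⟩, hy⟩, rfl⟩
  have hσy : ‖σ (Fin.tail y)‖ ≤ D := mem_closedBall_zero_iff.mp (hσ ⟨_, hy, rfl⟩)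
  rw [mem_closedBall_zero_iff, coneMap_apply, norm_smul, Real.norm_of_nonneg hy0]
  nlinarith [norm_nonneg (σ (Fin.tail y))]

end coneMap

section integration

open Set

variable {k : ℕ}

theorem convex_stdCone : Convex ℝ (stdCone k) := by
  intro x hx y hy a b ha hb hab
  refine ⟨fun i => ?_, ?_⟩
  · simp only [Pi.add_apply, Pi.smul_apply, smul_eq_mul]
    exact add_nonneg (mul_nonneg ha (hx.1 i)) (mul_nonneg hb (hy.1 i))
  · simp only [Pi.add_apply, Pi.smul_apply, smul_eq_mul, Finset.sum_add_distrib, ← Finset.mul_sum]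
    calc a * ∑ i, x i + b * ∑ i, y i ≤ a * 1 + b * 1 := by gcongr; exacts [hx.2, hy.2]
      _ = 1 := by rw [mul_one, mul_one, hab]

theorem isClosed_stdCone : IsClosed (stdCone k) := by
  simp only [stdCone, ofPred_and, ofPred_forall]
  exact (isClosed_iInter fun i => isClosed_le continuous_const (continuous_apply i)).inter
    (isClosed_le (by fun_prop) continuous_const)

theorem stdCone_subset_Icc : stdCone k ⊆ Icc 0 1 := fun _ hx =>
  ⟨hx.1, fun i => (Finset.single_le_sum (fun j _ => hx.1 j) (Finset.mem_univ i)).trans hx.2⟩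

theorem volume_stdCone_lt_top : volume (stdCone k) < ⊤ :=
  (measure_mono stdCone_subset_Icc).trans_lt (by simp [Real.volume_Icc_pi])

theorem integrableOn_stdCone_jacNorm_fderiv {n : ℕ} {σ : (Fin k → ℝ) → EuclideanSpace ℝ (Fin n)}
    {K : NNReal} (hσ : LipschitzOnWith K σ (stdCone k)) :
    IntegrableOn (fun x => jacNorm (fderiv ℝ σ x)) (stdCone k) := by
  rw [← integrableOn_congr_set_ae
    (interior_ae_eq_of_null_frontier (convex_stdCone.addHaar_frontier volume))]
  have : IsFiniteMeasure (volume.restrict (interior (stdCone k))) :=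
    isFiniteMeasure_restrict.mpr ((measure_mono interior_subset).trans_lt volume_stdCone_lt_top).ne
  refine Integrable.of_bound
    (continuous_jacNorm.measurable.comp (measurable_fderiv ℝ σ)).aestronglyMeasurable (K ^ k) ?_
  filter_upwards [ae_restrict_mem measurableSet_interior] with x hx
  rw [Real.norm_of_nonneg (jacNorm_nonneg _)]
  exact (jacNorm_le_opNorm_pow _).trans (pow_le_pow_left₀ (norm_nonneg _)
    (norm_fderiv_le_of_lipschitzOn ℝ (mem_interior_iff_mem_nhds.mp hx) hσ) k)

theorem piFinSuccAbove_zero_apply {α : Type*} [MeasurableSpace α] (y : Fin (k + 1) → α) :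
    MeasurableEquiv.piFinSuccAbove (fun _ => α) 0 y = (y 0, Fin.tail y) := by
  simp

theorem coneDomain_eq_preimage :
    coneDomain k =
      MeasurableEquiv.piFinSuccAbove (fun _ => ℝ) 0 ⁻¹' (Icc (0 : ℝ) 1 ×ˢ stdCone k) := by
  ext y
  simp only [mem_preimage, piFinSuccAbove_zero_apply, mem_prod]
  rfl

theorem measurableSet_coneDomain : MeasurableSet (coneDomain k) := by
  rw [coneDomain_eq_preimage]
  exact (measurableSet_Icc.prod isClosed_stdCone.measurableSet).preimage
    (MeasurableEquiv.measurable _)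

theorem setIntegral_coneDomain_comp_tail {E : Type*} [NormedAddCommGroup E] [NormedSpace ℝ E]
    (f : (Fin k → ℝ) → E) :
    ∫ y in coneDomain k, f (Fin.tail y) = ∫ x in stdCone k, f x := by
  let e := MeasurableEquiv.piFinSuccAbove (fun _ : Fin (k + 1) => ℝ) 0
  calc ∫ y in coneDomain k, f (Fin.tail y)
      = ∫ y in e ⁻¹' (Icc (0 : ℝ) 1 ×ˢ stdCone k), f (e y).2 := by
        simp only [coneDomain_eq_preimage, e, piFinSuccAbove_zero_apply]
    _ = ∫ p in Icc (0 : ℝ) 1 ×ˢ stdCone k, f p.2 :=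
        (volume_preserving_piFinSuccAbove _ 0).setIntegral_preimage_emb e.measurableEmbedding
          (fun p => f p.2) _
    _ = ∫ x in stdCone k, f x := by
        rw [Measure.volume_eq_prod, ← Measure.prod_restrict, integral_fun_snd]
        simp

theorem integrableOn_coneDomain_comp_tail {E : Type*} [NormedAddCommGroup E]
    {f : (Fin k → ℝ) → E} (hf : IntegrableOn f (stdCone k)) :
    IntegrableOn (fun y => f (Fin.tail y)) (coneDomain k) := by
  let e := MeasurableEquiv.piFinSuccAbove (fun _ : Fin (k + 1) => ℝ) 0
  have hprod : IntegrableOn (fun p : ℝ × (Fin k → ℝ) => f p.2) (Icc (0 : ℝ) 1 ×ˢ stdCone k) := by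
    rw [IntegrableOn, Measure.volume_eq_prod, ← Measure.prod_restrict]
    exact hf.comp_snd _
  have := ((volume_preserving_piFinSuccAbove _ 0).integrableOn_comp_preimage
    e.measurableEmbedding).mpr hprod
  simpa only [coneDomain_eq_preimage, e, Function.comp_def, piFinSuccAbove_zero_apply] using this

theorem ae_apply_zero_ne_zero : ∀ᵐ y : Fin (k + 1) → ℝ, y 0 ≠ 0 :=
  (Measure.quasiMeasurePreserving_eval (fun _ : Fin (k + 1) => (volume : Measure ℝ)) 0).ae
    (p := (· ≠ 0)) (by simp [ae_iff])

end integration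

theorem stmt_6 (n k : ℕ) (D : ℝ) (hD : 0 ≤ D)
    (σ : (Fin k → ℝ) → EuclideanSpace ℝ (Fin n)) (K : NNReal)
    (hσlip : LipschitzOnWith K σ (stdCone k))
    (hσball : σ '' stdCone k ⊆ Metric.closedBall 0 D) :
    (∫ y in coneDomain k, jacNorm (fderiv ℝ (coneMap σ) y)) ≤ D * simplexMass σ ∧
      coneMap σ '' coneDomain k ⊆ Metric.closedBall 0 D := by
  refine ⟨?_, image_coneMap_subset_closedBall σ hσball⟩
  have hpointwise : ∀ᵐ y ∂volume.restrict (coneDomain k),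
      jacNorm (fderiv ℝ (coneMap σ) y) ≤ D * jacNorm (fderiv ℝ σ (Fin.tail y)) := by
    filter_upwards [ae_restrict_of_ae ae_apply_zero_ne_zero,
      ae_restrict_mem measurableSet_coneDomain] with y hy0 ⟨⟨ht0, ht1⟩, hy⟩
    exact jacNorm_fderiv_coneMap_le σ hD hy0 (abs_le.mpr ⟨by linarith, ht1⟩)
      (mem_closedBall_zero_iff.mp (hσball ⟨_, hy, rfl⟩))
  calc (∫ y in coneDomain k, jacNorm (fderiv ℝ (coneMap σ) y))
      ≤ ∫ y in coneDomain k, D * jacNorm (fderiv ℝ σ (Fin.tail y)) :=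
        integral_mono_of_nonneg (.of_forall fun _ => jacNorm_nonneg _)
          ((integrableOn_coneDomain_comp_tail
            (integrableOn_stdCone_jacNorm_fderiv hσlip)).const_mul D) hpointwise
    _ = D * simplexMass σ := by
        rw [integral_const_mul, setIntegral_coneDomain_comp_tail fun x => jacNorm (fderiv ℝ σ x)]
        rfl
end

section
/- Let (e_I)_I and (f_I)_I be two families of vectors in an inner product space indexed by a finite totally ordered set, with (e_I) orthonormal, and suppose f_I = e_I + ∑_{J > I} a_{IJ} e_J with |a_{IJ}| ≤ A for all I, J. Then for every vector v = ∑ c_I f_I one has ‖v‖ ≥ (1 + mA)^{-m} · (∑ c_I²)^{1/2} and ‖v‖ ≤ (1 + mA) · (∑ c_I²)^{1/2}, where m is the cardinality of the index set. -/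
/-! Write `∑ c_I f_I = ∑_J ((1 + N) c)_J e_J`, where `N` is the strictly lower triangular matrix
`N J I = a I J`; the norm of the vector is then the Euclidean norm of `(1 + N) c`. Entries
bounded by `A` give `‖N‖ ≤ mA`, hence the upper bound. For the lower bound, `N ^ m = 0` and
`x = (1 + N) x - N x`, where `N x` has nilpotency order one less and
`(1 + N) (N x) = N ((1 + N) x)`; induction on the order gives
`‖x‖ ≤ (1 + mA) ^ m ‖(1 + N) x‖`. -/

open Finset Matrix

theorem norm_le_one_add_pow_mul_norm_add_apply {R E : Type*} [Semiring R]
    [SeminormedAddCommGroup E] [Module R E] (N : Module.End R E) {K : ℝ} (hK : 0 ≤ K)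
    (hN : ∀ y, ‖N y‖ ≤ K * ‖y‖) {m : ℕ} {x : E} (hx : (N ^ m) x = 0) :
    ‖x‖ ≤ (1 + K) ^ m * ‖x + N x‖ := by
  induction m generalizing x with
  | zero => simp_all
  | succ m ih =>
    have hNx : ‖N x‖ ≤ (1 + K) ^ m * K * ‖x + N x‖ :=
      calc ‖N x‖ ≤ (1 + K) ^ m * ‖N x + N (N x)‖ :=
            ih (by rwa [← Module.End.mul_apply, ← pow_succ])
        _ = (1 + K) ^ m * ‖N (x + N x)‖ := by rw [map_add]
        _ ≤ (1 + K) ^ m * (K * ‖x + N x‖) := by gcongr; exact hN _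
        _ = (1 + K) ^ m * K * ‖x + N x‖ := by ring
    have hpow : 1 ≤ (1 + K) ^ m := one_le_pow₀ (by linarith)
    calc ‖x‖ = ‖x + N x - N x‖ := by rw [add_sub_cancel_right]
      _ ≤ ‖x + N x‖ + ‖N x‖ := norm_sub_le _ _
      _ ≤ (1 + K) ^ (m + 1) * ‖x + N x‖ := by
        rw [pow_succ]; nlinarith [norm_nonneg (x + N x)]

theorem Matrix.norm_toLpLin_two_le {ι : Type*} [Fintype ι] [DecidableEq ι] (M : Matrix ι ι ℝ)
    {A : ℝ} (hA : 0 ≤ A) (hM : ∀ i j, |M i j| ≤ A) (x : EuclideanSpace ℝ ι) :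
    ‖M.toLpLin 2 2 x‖ ≤ Fintype.card ι * A * ‖x‖ := by
  have hrow : ∀ i, (∑ j, M i j * x j) ^ 2 ≤ Fintype.card ι * A ^ 2 * ‖x‖ ^ 2 := fun i =>
    calc (∑ j, M i j * x j) ^ 2 ≤ (∑ j, M i j ^ 2) * ∑ j, x j ^ 2 :=
          sum_mul_sq_le_sq_mul_sq _ _ _
      _ ≤ (∑ _j : ι, A ^ 2) * ‖x‖ ^ 2 := by
        rw [EuclideanSpace.real_norm_sq_eq]
        refine mul_le_mul_of_nonneg_right (sum_le_sum fun j _ => ?_) (by positivity)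
        exact sq_le_sq' (abs_le.mp (hM i j)).1 (abs_le.mp (hM i j)).2
      _ = Fintype.card ι * A ^ 2 * ‖x‖ ^ 2 := by simp
  refine (pow_le_pow_iff_left₀ (norm_nonneg _) (by positivity) two_ne_zero).mp ?_
  calc ‖M.toLpLin 2 2 x‖ ^ 2 = ∑ i, (∑ j, M i j * x j) ^ 2 := by
        simp [EuclideanSpace.real_norm_sq_eq, toLpLin_apply, mulVec, dotProduct]
    _ ≤ ∑ _i : ι, Fintype.card ι * A ^ 2 * ‖x‖ ^ 2 := sum_le_sum fun i _ => hrow i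
    _ = (Fintype.card ι * A * ‖x‖) ^ 2 := by simp; ring

def Matrix.IsStrictLowerTriangular {ι R : Type*} [LinearOrder ι] [Zero R]
    (M : Matrix ι ι R) : Prop :=
  ∀ i j, i ≤ j → M i j = 0

theorem Matrix.IsStrictLowerTriangular.pow_apply_eq_zero {ι R : Type*} [Fintype ι]
    [LinearOrder ι] [Semiring R] {M : Matrix ι ι R} (hM : M.IsStrictLowerTriangular)
    {k : ℕ} {i : ι} (hi : #(univ.filter (· < i)) < k) (j : ι) : (M ^ k) i j = 0 := by
  induction k generalizing i with
  | zero => exact absurd hi (Nat.not_lt_zero _)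
  | succ k ih =>
    rw [pow_succ', mul_apply]
    refine sum_eq_zero fun l _ => ?_
    rcases le_or_gt i l with hil | hli
    · rw [hM i l hil, zero_mul]
    · have hsub : univ.filter (· < l) ⊂ univ.filter (· < i) :=
        (ssubset_iff_of_subset fun y hy => by
          simp only [mem_filter, mem_univ, true_and] at hy ⊢; exact hy.trans hli).2
          ⟨l, by simpa using hli, by simp⟩
      rw [ih (by have := card_lt_card hsub; omega), mul_zero]

theorem Matrix.IsStrictLowerTriangular.pow_card_eq_zero {ι R : Type*} [Fintype ι] [LinearOrder ι]
    [Semiring R] {M : Matrix ι ι R} (hM : M.IsStrictLowerTriangular) :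
    M ^ Fintype.card ι = 0 := by
  ext i j
  refine hM.pow_apply_eq_zero ?_ j
  rw [← card_univ]
  exact card_lt_card (filter_ssubset.2 ⟨i, mem_univ _, lt_irrefl i⟩)

theorem sum_smul_eq_sum_add_mulVec_smul {R V ι : Type*} [CommSemiring R] [AddCommMonoid V]
    [Module R V] [Fintype ι] {e f : ι → V} {B : Matrix ι ι R}
    (hf : ∀ i, f i = e i + ∑ j, B j i • e j) (c : ι → R) :
    ∑ i, c i • f i = ∑ j, (c j + (B *ᵥ c) j) • e j := by
  simp only [hf, smul_add, sum_add_distrib, add_smul, smul_sum, smul_smul, mulVec, dotProduct,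
    sum_smul]
  rw [sum_comm (f := fun i j => (c i * B j i) • e j)]
  simp only [mul_comm]

theorem Orthonormal.norm_sum_smul {E ι : Type*} [SeminormedAddCommGroup E]
    [InnerProductSpace ℝ E] [Fintype ι] {e : ι → E} (he : Orthonormal ℝ e)
    (x : EuclideanSpace ℝ ι) : ‖∑ i, x i • e i‖ = ‖x‖ := by
  rw [← sq_eq_sq₀ (norm_nonneg _) (norm_nonneg _), ← real_inner_self_eq_norm_sq, he.inner_sum,
    EuclideanSpace.real_norm_sq_eq]
  simp [sq]

theorem stmt_12 (E : Type*) [NormedAddCommGroup E] [InnerProductSpace ℝ E]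
    (ι : Type*) [Fintype ι] [LinearOrder ι]
    (e f : ι → E) (he : Orthonormal ℝ e) (a : ι → ι → ℝ) (A : ℝ) (hA : 0 ≤ A)
    (hf : ∀ I, f I = e I + ∑ J ∈ Finset.univ.filter (fun J => I < J), a I J • e J)
    (ha : ∀ I J, |a I J| ≤ A) (c : ι → ℝ) :
    ((1 + (Fintype.card ι : ℝ) * A) ^ (Fintype.card ι))⁻¹ * Real.sqrt (∑ I, c I ^ 2) ≤
        ‖∑ I, c I • f I‖ ∧
      ‖∑ I, c I • f I‖ ≤ (1 + (Fintype.card ι : ℝ) * A) * Real.sqrt (∑ I, c I ^ 2) := by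
  set B : Matrix ι ι ℝ := Matrix.of fun J I => if I < J then a I J else 0
  have hB : B.IsStrictLowerTriangular := fun J I h => if_neg (not_lt.2 h)
  have hBA : ∀ J I, |B J I| ≤ A := fun J I => by
    by_cases h : I < J <;> simp [B, h, ha, hA]
  set N := B.toLpLin 2 2
  set x : EuclideanSpace ℝ ι := WithLp.toLp 2 c
  have hN : ∀ y, ‖N y‖ ≤ Fintype.card ι * A * ‖y‖ := B.norm_toLpLin_two_le hA hBA
  have hnil : (N ^ Fintype.card ι) x = 0 := by
    rw [← toLpLin_pow, hB.pow_card_eq_zero, map_zero, LinearMap.zero_apply]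
  have hv : ∑ I, c I • f I = ∑ J, (x + N x) J • e J := by
    rw [sum_smul_eq_sum_add_mulVec_smul (e := e) (B := B)
      (fun I => by simp [hf, B, sum_filter, ite_smul])]
    simp [x, N, toLpLin_apply]
  have hx_norm : ‖x‖ = √(∑ I, c I ^ 2) := by simp [x, EuclideanSpace.norm_eq]
  rw [hv, he.norm_sum_smul, ← hx_norm]
  constructor
  · rw [inv_mul_le_iff₀ (by positivity)]
    exact norm_le_one_add_pow_mul_norm_add_apply N (by positivity) hN hnil
  · calc ‖x + N x‖ ≤ ‖x‖ + Fintype.card ι * A * ‖x‖ :=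
          (norm_add_le _ _).trans (by gcongr; exact hN x)
      _ = (1 + Fintype.card ι * A) * ‖x‖ := by ring
end
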